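/- Let M, m, N : ℕ with N ≤ m and m + N ≤ M, and let V = Finset (Fin M) → ℂ carry the inner product making the basis (e_S) orthonormal, with Jordan–Wigner operators c_k, d_k. Let Ω : Fin M → ℝ and H = ∑_{k : Fin M} Ω_k (c_k ∘ d_k) (so H e_S = (∑_{k ∈ S} Ω_k) e_S). Let Φ = (1/√2)(e_{S₁} + e_{S₂}) where S₁ = {k : Fin M | (k:ℕ) < N} and S₂ = {k : Fin M | m ≤ (k:ℕ) ∧ (k:ℕ) < m + N}. Then 4·(⟪Φ, H(HΦ)⟫ − ⟪Φ, HΦ⟫²) = (∑_{k<N} (Ω_{m+k} − Ω_k))². -/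

import Mathlib

open scoped BigOperators

/-- The fermionic Fock space over `M` modes. -/
abbrev FockSpace (M : ℕ) : Type := Finset (Fin M) → ℂ

/-- The inner product on the Fock space making the basis `(e_S)` orthonormal. -/
noncomputable def fockInner {M : ℕ} (f g : FockSpace M) : ℂ :=
  ∑ S, starRingEnd ℂ (f S) * g S

/-- The Jordan–Wigner creation operator `c_k`. -/
noncomputable def crea {M : ℕ} (k : Fin M) : FockSpace M →ₗ[ℂ] FockSpace M :=
  (Pi.basisFun ℂ (Finset (Fin M))).constr ℂ fun S =>
    if k ∈ S then 0
    else ((-1 : ℂ) ^ (S.filter fun j => j < k).card) • (Pi.single (insert k S) (1 : ℂ) : FockSpace M)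

/-- The Jordan–Wigner annihilation operator `d_k`. -/
noncomputable def annih {M : ℕ} (k : Fin M) : FockSpace M →ₗ[ℂ] FockSpace M :=
  (Pi.basisFun ℂ (Finset (Fin M))).constr ℂ fun S =>
    if k ∈ S then ((-1 : ℂ) ^ (S.filter fun j => j < k).card) • (Pi.single (S.erase k) (1 : ℂ) : FockSpace M)
    else 0

/-- The quadratic Hamiltonian `H = ∑_k Ω_k a_k† a_k`. -/
noncomputable def Ham (M : ℕ) (Ω : Fin M → ℝ) : FockSpace M →ₗ[ℂ] FockSpace M :=
  ∑ k : Fin M, ((Ω k : ℝ) : ℂ) • (crea k ∘ₗ annih k)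

/-!
Every basis vector `e_S` is an eigenvector of `H`, with eigenvalue `∑_{k ∈ S} Ω_k`, because the
two Jordan–Wigner signs of `c_k d_k` cancel. For an equal-weight superposition of two distinct
eigenvectors with eigenvalues `a` and `b`, the variance of `H` is `((b - a) / 2)²`. The two
eigenvalues here are the sums of `Ω` over the windows `[m, m + N)` and `[0, N)`.
-/

open Finset

theorem Fin.sum_filter_window {R : Type*} [AddCommMonoid R] {M m N : ℕ} (h : m + N ≤ M)
    (f : Fin M → R) :
    ∑ k ∈ univ.filter (fun k : Fin M => m ≤ (k : ℕ) ∧ (k : ℕ) < m + N), f k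
      = ∑ k : Fin N, f ⟨m + k, by omega⟩ := by
  symm
  refine sum_nbij (fun k => ⟨m + k, by omega⟩) (fun k _ => ?_) (fun k _ l _ hkl => ?_)
    (fun k hk => ?_) (fun _ _ => rfl)
  · simp
  · simp only [Fin.mk.injEq, add_right_inj] at hkl
    exact Fin.ext hkl
  · simp only [coe_filter, mem_univ, true_and, Set.mem_ofPred_eq] at hk
    exact ⟨⟨k - m, by omega⟩, by simp, Fin.ext (by simp; omega)⟩

namespace FockSpace

variable {M : ℕ}

noncomputable def fisherInformation (A : FockSpace M →ₗ[ℂ] FockSpace M) (Φ : FockSpace M) : ℂ :=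
  4 * (fockInner Φ (A (A Φ)) - fockInner Φ (A Φ) ^ 2)

noncomputable def equalSuperposition (S T : Finset (Fin M)) : FockSpace M :=
  ((Real.sqrt 2 : ℝ) : ℂ)⁻¹ • (Pi.single S 1 + Pi.single T 1)

theorem fockInner_single_left (S : Finset (Fin M)) (f : FockSpace M) :
    fockInner (Pi.single S 1) f = f S := by
  simp [fockInner, Pi.single_apply]

theorem fockInner_add_left (f f' g : FockSpace M) :
    fockInner (f + f') g = fockInner f g + fockInner f' g := by
  simp only [fockInner, Pi.add_apply, map_add, add_mul, sum_add_distrib]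

theorem fockInner_smul_left (c : ℂ) (f g : FockSpace M) :
    fockInner (c • f) g = starRingEnd ℂ c * fockInner f g := by
  simp only [fockInner, Pi.smul_apply, smul_eq_mul, map_mul, mul_sum, mul_assoc]

theorem fockInner_equalSuperposition (S T : Finset (Fin M)) (f : FockSpace M) :
    fockInner (equalSuperposition S T) f = ((Real.sqrt 2 : ℝ) : ℂ)⁻¹ * (f S + f T) := by
  rw [equalSuperposition, fockInner_smul_left, fockInner_add_left, fockInner_single_left,
    fockInner_single_left, map_inv₀, Complex.conj_ofReal]

theorem fisherInformation_equalSuperposition (A : FockSpace M →ₗ[ℂ] FockSpace M) {S T : Finset (Fin M)}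
    (hST : S ≠ T) {a b : ℂ} (hS : A (Pi.single S 1) = a • Pi.single S 1)
    (hT : A (Pi.single T 1) = b • Pi.single T 1) :
    fisherInformation A (equalSuperposition S T) = (b - a) ^ 2 := by
  have hc : (((Real.sqrt 2 : ℝ) : ℂ)⁻¹) ^ 2 = 2⁻¹ := by
    rw [← Complex.ofReal_inv, ← Complex.ofReal_pow, inv_pow, Real.sq_sqrt zero_le_two]
    push_cast; rfl
  set c : ℂ := ((Real.sqrt 2 : ℝ) : ℂ)⁻¹
  have hA : A (equalSuperposition S T) = c • (a • Pi.single S 1 + b • Pi.single T 1) := by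
    rw [equalSuperposition, map_smul, map_add, hS, hT]
  have hAA : A (A (equalSuperposition S T)) = c • ((a * a) • Pi.single S 1 + (b * b) • Pi.single T 1) := by
    rw [hA, map_smul, map_add, map_smul, map_smul, hS, hT, smul_smul, smul_smul]
  have hexp : ∀ x y : ℂ,
      fockInner (equalSuperposition S T) (c • (x • Pi.single S 1 + y • Pi.single T 1)) = 2⁻¹ * (x + y) := by
    intro x y
    simp only [fockInner_equalSuperposition, Pi.smul_apply, Pi.add_apply, Pi.single_eq_same,
      Pi.single_eq_of_ne hST, Pi.single_eq_of_ne hST.symm, smul_eq_mul]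
    linear_combination (x + y) * hc
  rw [fisherInformation, hAA, hA, hexp, hexp]
  ring

theorem crea_comp_annih_single (k : Fin M) (S : Finset (Fin M)) :
    (crea k ∘ₗ annih k) (Pi.single S 1) = if k ∈ S then Pi.single S 1 else 0 := by
  have hbasis (T : Finset (Fin M)) : (Pi.single T 1 : FockSpace M) = Pi.basisFun ℂ _ T :=
    (Pi.basisFun_apply ℂ _ T).symm
  by_cases hk : k ∈ S
  · have hsign : ((S.erase k).filter fun j => j < k) = S.filter fun j => j < k := by
      rw [filter_erase]
      exact erase_eq_of_notMem (by simp)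
    rw [LinearMap.comp_apply, hbasis, annih, Module.Basis.constr_basis, if_pos hk, map_smul,
      hbasis, crea, Module.Basis.constr_basis, if_neg (notMem_erase k S), hsign, insert_erase hk,
      smul_smul, ← pow_add, ← two_mul, pow_mul, neg_one_sq, one_pow, one_smul, if_pos hk, hbasis]
  · rw [LinearMap.comp_apply, hbasis, annih, Module.Basis.constr_basis, if_neg hk, if_neg hk,
      map_zero]

theorem Ham_single (Ω : Fin M → ℝ) (S : Finset (Fin M)) :
    Ham M Ω (Pi.single S 1) = (∑ k ∈ S, (Ω k : ℂ)) • Pi.single S 1 := by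
  simp only [Ham, LinearMap.sum_apply, LinearMap.smul_apply, crea_comp_annih_single, smul_ite,
    smul_zero, sum_ite_mem, univ_inter, sum_smul]

end FockSpace

open FockSpace

/-- for the NOON-like fermion state `Φ = (e_{S₁} + e_{S₂})/√2`, with
`S₁` the first `N` modes and `S₂` the modes `m, …, m+N−1`, the quantum Fisher
information (four times the variance) of `H = ∑_k Ω_k a_k† a_k` equals
`(∑_{k<N} (Ω_{m+k} − Ω_k))²`. -/
theorem fisher_information_noon_state (M m N : ℕ) (hN : N ≤ m) (hM : m + N ≤ M)
    (Ω : Fin M → ℝ) :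
    (fun Φ : FockSpace M =>
      4 * (fockInner Φ (Ham M Ω (Ham M Ω Φ)) - (fockInner Φ (Ham M Ω Φ)) ^ 2))
      (((Real.sqrt 2 : ℝ) : ℂ)⁻¹ •
        ((Pi.single (Finset.univ.filter fun k : Fin M => (k : ℕ) < N) (1 : ℂ) : FockSpace M)
          + (Pi.single (Finset.univ.filter fun k : Fin M =>
              m ≤ (k : ℕ) ∧ (k : ℕ) < m + N) (1 : ℂ) : FockSpace M)))
      = (((∑ k : Fin N, (Ω ⟨m + k.1, by have := k.isLt; omega⟩
            - Ω ⟨k.1, by have := k.isLt; omega⟩)) ^ 2 : ℝ) : ℂ) := by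
  set S₁ : Finset (Fin M) := univ.filter fun k : Fin M => (k : ℕ) < N
  set S₂ : Finset (Fin M) := univ.filter fun k : Fin M => m ≤ (k : ℕ) ∧ (k : ℕ) < m + N
  change fisherInformation (Ham M Ω) (equalSuperposition S₁ S₂) = _
  rcases N.eq_zero_or_pos with rfl | hN₀
  · have h₁ : S₁ = ∅ := by simp [S₁]
    have h₂ : S₂ = ∅ := by simp [S₂]
    simp [h₁, h₂, fisherInformation, equalSuperposition, Ham_single, fockInner]
  · have hne : S₁ ≠ S₂ := by
      intro h
      have h₀ : (⟨0, by omega⟩ : Fin M) ∈ S₁ := by simp [S₁, hN₀]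
      rw [h] at h₀
      simp [S₂] at h₀
      omega
    have hS₁ : S₁ = univ.filter fun k : Fin M => 0 ≤ (k : ℕ) ∧ (k : ℕ) < 0 + N := by simp [S₁]
    rw [fisherInformation_equalSuperposition _ hne (Ham_single Ω S₁) (Ham_single Ω S₂), hS₁,
      Fin.sum_filter_window (m := 0) (by omega), Fin.sum_filter_window hM]
    push_cast
    simp [sum_sub_distrib]
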